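/- For every n ≥ 4 and all homogeneous v₁,…,v_n ∈ V, the expressions Φ_m(v₁,…,v_m) := ∑_{k+l=m+1, k,l≥2} ∑_{j=0}^{k−1} (−1)^r λ_k(v₁,…,v_j, λ_l(v_{j+1},…,v_{j+l}), v_{j+l+1},…,v_m) (with r = l(|v₁|+⋯+|v_j|) + j(l−1) + (k−1)l) satisfy the recursion: Φ_n(v₁,…,v_n) = ∑_{k+l=n, k≥3, l≥1} (−1)^{(l−1)(|v₁|+⋯+|v_k|)+k} [QΦ_k(v₁,…,v_k)]·[Qλ_l(v_{k+1},…,v_n)] − ∑_{k+l=n, k≥1, l≥3} (−1)^{l(|v₁|+⋯+|v_k|)} [Qλ_k(v₁,…,v_k)]·[QΦ_l(v_{k+1},…,v_n)], where the terms with k = 1 or l = 1 are interpreted via the convention Qλ₁ := −Id. -/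
import Mathlib


open Finset

/-- The sign `(-1)^x` for a parity `x : ZMod 2`, valued in a ring `A`. -/
def sgn {A : Type*} [Ring A] (x : ZMod 2) : A := (-1 : A) ^ x.val

/-- The sum of the first `j` parities, `|v₁| + ⋯ + |v_j|`. -/
def psum (p : ℕ → ZMod 2) (j : ℕ) : ZMod 2 := ∑ i ∈ Finset.range j, p i

/-- `Qλ_n`, with the convention `Qλ₁ := -Id`. -/
def Qlam {A : Type*} [Neg A] (Q : A → A)
    (lam : ℕ → (ℕ → A) → (ℕ → ZMod 2) → A) :
    ℕ → (ℕ → A) → (ℕ → ZMod 2) → A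
  | 1, v, _ => -(v 0)
  | n, v, p => Q (lam n v p)

/-- The tuple obtained from `v` by replacing the block `v_{j+1}, …, v_{j+l}`
of length `l` by the single element `x` (0-indexed: `x` sits at slot `j`). -/
def insE {A : Type*} (v : ℕ → A) (j l : ℕ) (x : A) : ℕ → A :=
  fun i => if i < j then v i else if i = j then x else v (i + l - 1)

/-- The corresponding tuple of parities, where the inserted element has parity `q`. -/
def insP (p : ℕ → ZMod 2) (j l : ℕ) (q : ZMod 2) : ℕ → ZMod 2 :=
  fun i => if i < j then p i else if i = j then q else p (i + l - 1)

/-- `Φ_n(v₁,…,v_n) = ∑_{k+l=n+1, k,l≥2} ∑_{j=0}^{k-1} (-1)^r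
λ_k(v₁,…,v_j, λ_l(v_{j+1},…,v_{j+l}), v_{j+l+1},…,v_n)`,
with `r = l(|v₁|+⋯+|v_j|) + j(l-1) + (k-1)l`; the inserted element
`λ_l(v_{j+1},…,v_{j+l})` is homogeneous of parity `l + |v_{j+1}| + ⋯ + |v_{j+l}|`. -/
def Phi {A : Type*} [Ring A] (lam : ℕ → (ℕ → A) → (ℕ → ZMod 2) → A)
    (n : ℕ) (v : ℕ → A) (p : ℕ → ZMod 2) : A :=
  ∑ k ∈ Finset.Icc 2 (n - 1), ∑ j ∈ Finset.range k,
    sgn (((n + 1 - k : ℕ) : ZMod 2) * psum p j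
        + (j : ZMod 2) * (((n + 1 - k : ℕ) : ZMod 2) - 1)
        + ((k : ZMod 2) - 1) * ((n + 1 - k : ℕ) : ZMod 2)) *
      lam k
        (insE v j (n + 1 - k)
          (lam (n + 1 - k) (fun i => v (j + i)) (fun i => p (j + i))))
        (insP p j (n + 1 - k)
          (((n + 1 - k : ℕ) : ZMod 2) + ∑ i ∈ Finset.range (n + 1 - k), p (j + i)))

section Tools
variable {A : Type*} [Ring A]

lemma zmod2_cases (x : ZMod 2) : x = 0 ∨ x = 1 := by revert x; decide

lemma sgn_zero : (sgn 0 : A) = 1 := by simp [sgn]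
lemma val10 : (ZMod.val (1 : ZMod 2)) = 1 := rfl
lemma val11 : (ZMod.val (1 + 1 : ZMod 2)) = 0 := rfl
lemma sgn_one : (sgn 1 : A) = -1 := by simp [sgn, val10]

lemma sgn_add (x y : ZMod 2) : (sgn (x + y) : A) = sgn x * sgn y := by
  rcases zmod2_cases x with h | h <;> rcases zmod2_cases y with h' | h' <;>
    subst h <;> subst h' <;> simp [sgn, val10, val11]

lemma sgn_comm (x : ZMod 2) (a : A) : sgn x * a = a * sgn x := by
  rcases zmod2_cases x with h | h <;> subst h <;> simp [sgn_zero, sgn_one]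

lemma neg_sgn_mul (x : ZMod 2) (a : A) : -(sgn x * a) = sgn (x + 1) * a := by
  rw [sgn_add, sgn_one, mul_neg_one, neg_mul]

lemma sgn_mul_sgn_mul (x y : ZMod 2) (a : A) : sgn x * (sgn y * a) = sgn (x + y) * a := by
  rw [sgn_add, mul_assoc]

lemma zmod2_sub (x y : ZMod 2) : x - y = x + y := by revert x y; decide

end Tools

section Core
variable {A : Type*} [Ring A] (Q : A → A) (lam : ℕ → (ℕ → A) → (ℕ → ZMod 2) → A)

lemma Qlam_eq {m : ℕ} (h : 2 ≤ m) (v : ℕ → A) (p : ℕ → ZMod 2) :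
    Qlam Q lam m v p = Q (lam m v p) := by
  obtain ⟨t, rfl⟩ : ∃ t, m = t + 2 := ⟨m - 2, by omega⟩
  rfl

lemma Qlam_one (v : ℕ → A) (p : ℕ → ZMod 2) : Qlam Q lam 1 v p = -(v 0) := rfl

variable (hlam2 : ∀ (v : ℕ → A) (p : ℕ → ZMod 2), lam 2 v p = v 0 * v 1)
variable (hlamrec : ∀ n, 3 ≤ n → ∀ (v : ℕ → A) (p : ℕ → ZMod 2),
      lam n v p =
        - ∑ k ∈ Finset.Icc 1 (n - 1),
            sgn ((k : ZMod 2) + (((n - k : ℕ) : ZMod 2) - 1) * psum p k) *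
              (Qlam Q lam k v p *
                Qlam Q lam (n - k) (fun i => v (k + i)) (fun i => p (k + i))))

include hlam2 hlamrec in
lemma Lrec {m : ℕ} (h : 2 ≤ m) (v : ℕ → A) (p : ℕ → ZMod 2) :
    lam m v p =
      - ∑ k ∈ Finset.Icc 1 (m - 1),
          sgn ((k : ZMod 2) + (((m - k : ℕ) : ZMod 2) - 1) * psum p k) *
            (Qlam Q lam k v p *
              Qlam Q lam (m - k) (fun i => v (k + i)) (fun i => p (k + i))) := by
  rcases eq_or_lt_of_le h with h2 | h3
  · subst h2
    rw [hlam2]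
    norm_num
    simp [Qlam_one, sgn_one, neg_mul_neg]
  · exact hlamrec m h3 v p

include hlam2 hlamrec in
lemma lam_congr : ∀ m, 2 ≤ m → ∀ (v₁ v₂ : ℕ → A) (p₁ p₂ : ℕ → ZMod 2),
    (∀ i < m, v₁ i = v₂ i) → (∀ i < m, p₁ i = p₂ i) →
    lam m v₁ p₁ = lam m v₂ p₂ := by
  intro m
  induction m using Nat.strong_induction_on with
  | _ m IH =>
    intro hm v₁ v₂ p₁ p₂ hv hp
    rw [Lrec Q lam hlam2 hlamrec hm, Lrec Q lam hlam2 hlamrec hm]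
    congr 1
    apply Finset.sum_congr rfl
    intro a ha
    simp only [Finset.mem_Icc] at ha
    have ha1 : 1 ≤ a := ha.1
    have ha2 : a ≤ m - 1 := ha.2
    have hps : psum p₁ a = psum p₂ a := by
      apply Finset.sum_congr rfl
      intro i hi
      simp only [Finset.mem_range] at hi
      exact hp i (by omega)
    rw [hps]
    congr 2
    · rcases eq_or_lt_of_le ha1 with h1 | h1
      · rw [← h1, Qlam_one, Qlam_one, hv 0 (by omega)]
      · rw [Qlam_eq Q lam h1, Qlam_eq Q lam h1]
        exact congrArg Q (IH a (by omega) h1 v₁ v₂ p₁ p₂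
          (fun i hi => hv i (by omega)) (fun i hi => hp i (by omega)))
    · have hma : 1 ≤ m - a := by omega
      rcases eq_or_lt_of_le hma with h1 | h1
      · rw [← h1, Qlam_one, Qlam_one, hv (a + 0) (by omega)]
      · rw [Qlam_eq Q lam h1, Qlam_eq Q lam h1]
        exact congrArg Q (IH (m - a) (by omega) h1 _ _ _ _
          (fun i hi => hv (a + i) (by omega)) (fun i hi => hp (a + i) (by omega)))

include hlam2 hlamrec in
lemma Qlam_congr {m : ℕ} (hm : 1 ≤ m) (v₁ v₂ : ℕ → A) (p₁ p₂ : ℕ → ZMod 2)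
    (hv : ∀ i < m, v₁ i = v₂ i) (hp : ∀ i < m, p₁ i = p₂ i) :
    Qlam Q lam m v₁ p₁ = Qlam Q lam m v₂ p₂ := by
  rcases eq_or_lt_of_le hm with h1 | h1
  · rw [← h1, Qlam_one, Qlam_one, hv 0 (by omega)]
  · rw [Qlam_eq Q lam h1, Qlam_eq Q lam h1]
    exact congrArg Q (lam_congr Q lam hlam2 hlamrec m h1 v₁ v₂ p₁ p₂ hv hp)

end Core

set_option linter.unusedSectionVars false
section Sums
variable {A : Type*} [Ring A]

lemma psum_add (p : ℕ → ZMod 2) (s t : ℕ) :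
    psum p (s + t) = psum p s + ∑ i ∈ Finset.range t, p (s + i) := by
  unfold psum
  rw [Finset.sum_range_add]

lemma psum_insP_le {p : ℕ → ZMod 2} {j l a : ℕ} (q : ZMod 2) (h : a ≤ j) :
    psum (insP p j l q) a = psum p a := by
  apply Finset.sum_congr rfl
  intro i hi
  simp only [Finset.mem_range] at hi
  simp only [insP, if_pos (by omega : i < j)]

lemma psum_insP_gt {p : ℕ → ZMod 2} {j l a : ℕ} (q : ZMod 2) (h : j < a) (hl : 1 ≤ l) :
    psum (insP p j l q) a =
      psum p j + q + (psum p (a + l - 1) - psum p (j + l)) := by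
  have h1 : ∑ i ∈ Finset.Ico 0 j, insP p j l q i = ∑ i ∈ Finset.range j, p i := by
    rw [← Finset.range_eq_Ico]
    exact Finset.sum_congr rfl fun i hi => by
      simp only [Finset.mem_range] at hi
      simp only [insP, if_pos hi]
  have h2 : insP p j l q j = q := by simp [insP]
  have h3 : ∑ i ∈ Finset.Ico (j + 1) a, insP p j l q i
      = ∑ i ∈ Finset.Ico (j + l) (a + l - 1), p i := by
    apply Finset.sum_nbij' (fun i => i + l - 1) (fun i => i + 1 - l)
    · intro i hi; simp only [Finset.mem_Ico] at *; omega
    · intro i hi; simp only [Finset.mem_Ico] at *; omega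
    · intro i hi; simp only [Finset.mem_Ico] at hi; omega
    · intro i hi; simp only [Finset.mem_Ico] at hi; omega
    · intro i hi
      simp only [Finset.mem_Ico] at hi
      simp only [insP, if_neg (by omega : ¬ i < j), if_neg (by omega : ¬ i = j)]
  have h4 : ∑ i ∈ Finset.Ico (j + l) (a + l - 1), p i
      = ∑ i ∈ Finset.range (a + l - 1), p i - ∑ i ∈ Finset.range (j + l), p i :=
    Finset.sum_Ico_eq_sub _ (by omega)
  have h5 : ∑ i ∈ Finset.range a, insP p j l q i
      = ∑ i ∈ Finset.Ico 0 j, insP p j l q i + insP p j l q j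
        + ∑ i ∈ Finset.Ico (j + 1) a, insP p j l q i := by
    rw [Finset.range_eq_Ico,
      ← Finset.sum_Ico_consecutive (fun i => insP p j l q i) (Nat.zero_le j) (le_of_lt h),
      Finset.sum_eq_sum_Ico_succ_bot h]
    ring
  unfold psum
  rw [h5, h1, h2, h3, h4]

lemma insE_shift_le {v : ℕ → A} {j l a : ℕ} (x : A) (h : a ≤ j) :
    (fun i => insE v j l x (a + i)) = insE (fun i => v (a + i)) (j - a) l x := by
  funext i
  simp only [insE]
  rcases Nat.lt_trichotomy i (j - a) with h1 | h1 | h1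
  · rw [if_pos (by omega : a + i < j), if_pos h1]
  · rw [if_neg (by omega : ¬ a + i < j), if_pos (by omega : a + i = j),
      if_neg (by omega : ¬ i < j - a), if_pos h1]
  · rw [if_neg (by omega : ¬ a + i < j), if_neg (by omega : ¬ a + i = j),
      if_neg (by omega : ¬ i < j - a), if_neg (by omega : ¬ i = j - a)]
    congr 1
    omega

lemma insE_shift_gt {v : ℕ → A} {j l a : ℕ} (x : A) (h : j < a) (hl : 1 ≤ l) :
    (fun i => insE v j l x (a + i)) = fun i => v (a + l - 1 + i) := by
  funext i
  simp only [insE, if_neg (by omega : ¬ a + i < j), if_neg (by omega : ¬ a + i = j)]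
  congr 1
  omega

lemma insP_shift_le {p : ℕ → ZMod 2} {j l a : ℕ} (q : ZMod 2) (h : a ≤ j) :
    (fun i => insP p j l q (a + i)) = insP (fun i => p (a + i)) (j - a) l q := by
  funext i
  simp only [insP]
  rcases Nat.lt_trichotomy i (j - a) with h1 | h1 | h1
  · rw [if_pos (by omega : a + i < j), if_pos h1]
  · rw [if_neg (by omega : ¬ a + i < j), if_pos (by omega : a + i = j),
      if_neg (by omega : ¬ i < j - a), if_pos h1]
  · rw [if_neg (by omega : ¬ a + i < j), if_neg (by omega : ¬ a + i = j),
      if_neg (by omega : ¬ i < j - a), if_neg (by omega : ¬ i = j - a)]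
    congr 1
    omega

lemma insP_shift_gt {p : ℕ → ZMod 2} {j l a : ℕ} (q : ZMod 2) (h : j < a) (hl : 1 ≤ l) :
    (fun i => insP p j l q (a + i)) = fun i => p (a + l - 1 + i) := by
  funext i
  simp only [insP, if_neg (by omega : ¬ a + i < j), if_neg (by omega : ¬ a + i = j)]
  congr 1
  omega

lemma insE_lt {v : ℕ → A} {j l : ℕ} (x : A) {i : ℕ} (h : i < j) : insE v j l x i = v i := by
  simp [insE, h]

lemma insE_eq {v : ℕ → A} {j l : ℕ} (x : A) : insE v j l x j = x := by
  simp [insE]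

lemma sum_swap_filter (s t : Finset ℕ) (P : ℕ → ℕ → Prop) [∀ k a, Decidable (P k a)]
    (f : ℕ → ℕ → A) :
    ∑ k ∈ s, ∑ a ∈ t.filter (P k), f k a
      = ∑ a ∈ t, ∑ k ∈ s.filter (fun k => P k a), f k a := by
  simp only [Finset.sum_filter]
  exact Finset.sum_comm

lemma sum_Icc_shift (f : ℕ → A) (a b t : ℕ) :
    ∑ k ∈ Finset.Icc (a + t) (b + t), f k = ∑ k ∈ Finset.Icc a b, f (k + t) := by
  apply Finset.sum_nbij' (fun k => k - t) (fun k => k + t)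
  · intro k hk; simp only [Finset.mem_Icc] at *; omega
  · intro k hk; simp only [Finset.mem_Icc] at *; omega
  · intro k hk; simp only [Finset.mem_Icc] at hk; omega
  · intro k hk; simp only [Finset.mem_Icc] at hk; omega
  · intro k hk
    simp only [Finset.mem_Icc] at hk
    congr 1
    omega

lemma sum_Icc_reflect (f : ℕ → A) (a b N : ℕ) (hb : b ≤ N) (ha : a ≤ N) :
    ∑ k ∈ Finset.Icc a b, f k = ∑ k ∈ Finset.Icc (N - b) (N - a), f (N - k) := by
  apply Finset.sum_nbij' (fun k => N - k) (fun k => N - k)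
  · intro k hk; simp only [Finset.mem_Icc] at *; omega
  · intro k hk; simp only [Finset.mem_Icc] at *; omega
  · intro k hk; simp only [Finset.mem_Icc] at hk; omega
  · intro k hk; simp only [Finset.mem_Icc] at hk; omega
  · intro k hk
    simp only [Finset.mem_Icc] at hk
    congr 1
    omega

lemma Qmap_sum {Q : A → A} (hadd : ∀ x y, Q (x + y) = Q x + Q y)
    (s : Finset ℕ) (f : ℕ → A) : Q (∑ i ∈ s, f i) = ∑ i ∈ s, Q (f i) :=
  map_sum (AddMonoidHom.mk' Q hadd) f s

lemma Q_sgn_mul {Q : A → A} (hadd : ∀ x y, Q (x + y) = Q x + Q y)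
    (x : ZMod 2) (a : A) : Q (sgn x * a) = sgn x * Q a := by
  have hneg : ∀ y, Q (-y) = -Q y := fun y => map_neg (AddMonoidHom.mk' Q hadd) y
  rcases zmod2_cases x with h | h <;> subst h
  · simp [sgn_zero]
  · simp only [sgn_one, neg_one_mul]
    exact hneg a

end Sums

section Main
variable {A : Type*} [Ring A] (Q : A → A) (lam : ℕ → (ℕ → A) → (ℕ → ZMod 2) → A)
    (v : ℕ → A) (p : ℕ → ZMod 2)

/-- The generic summand in the full expansion of `Φ_n`. -/
def gterm (n k j a : ℕ) : A :=
  sgn ((((n + 1 - k : ℕ) : ZMod 2) * psum p j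
        + (j : ZMod 2) * (((n + 1 - k : ℕ) : ZMod 2) - 1)
        + ((k : ZMod 2) - 1) * ((n + 1 - k : ℕ) : ZMod 2))
      + ((a : ZMod 2) + (((k - a : ℕ) : ZMod 2) - 1) *
          psum (insP p j (n + 1 - k)
            (((n + 1 - k : ℕ) : ZMod 2) + ∑ i ∈ Finset.range (n + 1 - k), p (j + i))) a)
      + 1) *
    (Qlam Q lam a
        (insE v j (n + 1 - k)
          (lam (n + 1 - k) (fun i => v (j + i)) (fun i => p (j + i))))
        (insP p j (n + 1 - k)
          (((n + 1 - k : ℕ) : ZMod 2) + ∑ i ∈ Finset.range (n + 1 - k), p (j + i))) *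
      Qlam Q lam (k - a)
        (fun i => insE v j (n + 1 - k)
          (lam (n + 1 - k) (fun i => v (j + i)) (fun i => p (j + i))) (a + i))
        (fun i => insP p j (n + 1 - k)
          (((n + 1 - k : ℕ) : ZMod 2) + ∑ i ∈ Finset.range (n + 1 - k), p (j + i)) (a + i)))

variable (hlam2 : ∀ (v : ℕ → A) (p : ℕ → ZMod 2), lam 2 v p = v 0 * v 1)
variable (hlamrec : ∀ n, 3 ≤ n → ∀ (v : ℕ → A) (p : ℕ → ZMod 2),
      lam n v p =
        - ∑ k ∈ Finset.Icc 1 (n - 1),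
            sgn ((k : ZMod 2) + (((n - k : ℕ) : ZMod 2) - 1) * psum p k) *
              (Qlam Q lam k v p *
                Qlam Q lam (n - k) (fun i => v (k + i)) (fun i => p (k + i))))

include hlam2 hlamrec in
lemma master {n : ℕ} (hn : 2 ≤ n) :
    Phi lam n v p = ∑ k ∈ Finset.Icc 2 (n - 1), ∑ j ∈ Finset.range k,
      ∑ a ∈ Finset.Icc 1 (k - 1), gterm Q lam v p n k j a := by
  unfold Phi
  apply Finset.sum_congr rfl
  intro k hk
  simp only [Finset.mem_Icc] at hk
  apply Finset.sum_congr rfl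
  intro j hj
  rw [Lrec Q lam hlam2 hlamrec hk.1]
  rw [mul_neg, Finset.mul_sum, ← Finset.sum_neg_distrib]
  apply Finset.sum_congr rfl
  intro a ha
  rw [sgn_mul_sgn_mul, neg_sgn_mul]
  rfl

include hlam2 hlamrec in
lemma split_sum (n : ℕ) (hn : 4 ≤ n) (g : ℕ → ℕ → ℕ → A) :
    ∑ k ∈ Finset.Icc 2 (n - 1), ∑ j ∈ Finset.range k,
      ∑ a ∈ Finset.Icc 1 (k - 1), g k j a
    = (∑ k ∈ Finset.Icc 2 (n - 1), ∑ j ∈ Finset.range k,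
        ∑ a ∈ Finset.Icc 1 (min j (k - 2)), g k j a)
    + (∑ k ∈ Finset.Icc 2 (n - 1), ∑ j ∈ Finset.range k,
        ∑ a ∈ Finset.Icc (max j 1 + 1) (k - 1), g k j a)
    + (∑ k ∈ Finset.Icc 2 (n - 1), g k 0 1)
    + (∑ k ∈ Finset.Icc 2 (n - 1), g k (k - 1) (k - 1)) := by
  rw [← Finset.sum_add_distrib, ← Finset.sum_add_distrib, ← Finset.sum_add_distrib]
  apply Finset.sum_congr rfl
  intro k hk
  simp only [Finset.mem_Icc] at hk
  have h2k : 2 ≤ k := hk.1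
  have hx : (∑ k' ∈ ({(0 : ℕ)} : Finset ℕ), g k 0 1) = g k 0 1 := Finset.sum_singleton _ _
  have key : ∀ j < k, ∑ a ∈ Finset.Icc 1 (k - 1), g k j a
      = ∑ a ∈ Finset.Icc 1 (min j (k - 2)), g k j a
      + ∑ a ∈ Finset.Icc (max j 1 + 1) (k - 1), g k j a
      + (if j = 0 then g k 0 1 else 0)
      + (if j = k - 1 then g k j (k - 1) else 0) := by
    intro j hjk
    rcases Nat.eq_zero_or_pos j with rfl | hj0
    · rw [if_pos rfl, if_neg (by omega)]
      have e1 : Finset.Icc 1 (min 0 (k - 2)) = ∅ := by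
        apply Finset.Icc_eq_empty; omega
      have e2 : Finset.Icc (max 0 1 + 1) (k - 1) = Finset.Icc 2 (k - 1) := by
        congr 1
      have e3 : Finset.Icc 1 (k - 1) = Finset.Ico 1 k := by
        ext x; simp only [Finset.mem_Icc, Finset.mem_Ico]; omega
      have e4 : Finset.Icc 2 (k - 1) = Finset.Ico 2 k := by
        ext x; simp only [Finset.mem_Icc, Finset.mem_Ico]; omega
      rw [e1, e2, e3, e4, Finset.sum_eq_sum_Ico_succ_bot (by omega : 1 < k)]
      simp only [Finset.sum_empty]
      abel
    · rcases eq_or_ne j (k - 1) with rfl | hjtop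
      · rw [if_neg (by omega), if_pos rfl]
        have e1 : min (k - 1) (k - 2) = k - 2 := by omega
        have e2 : Finset.Icc (max (k - 1) 1 + 1) (k - 1) = ∅ := by
          apply Finset.Icc_eq_empty; omega
        have e3 : Finset.Icc 1 (k - 1) = Finset.Icc 1 ((k - 2) + 1) := by congr 1; omega
        rw [e1, e2, e3, Finset.sum_Icc_succ_top (by omega : 1 ≤ k - 2 + 1)]
        rw [show k - 2 + 1 = k - 1 by omega]
        simp only [Finset.sum_empty]
        abel
      · rw [if_neg (by omega), if_neg hjtop]
        have hj : 1 ≤ j ∧ j ≤ k - 2 := by omega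
        have e1 : min j (k - 2) = j := by omega
        have e2 : max j 1 = j := by omega
        have e3 : Finset.Icc 1 (k - 1) = Finset.Ioc 0 (k - 1) := by
          ext x; simp only [Finset.mem_Icc, Finset.mem_Ioc]; omega
        have e4 : Finset.Icc 1 j = Finset.Ioc 0 j := by
          ext x; simp only [Finset.mem_Icc, Finset.mem_Ioc]; omega
        have e5 : Finset.Icc (j + 1) (k - 1) = Finset.Ioc j (k - 1) := by
          ext x; simp only [Finset.mem_Icc, Finset.mem_Ioc]; omega
        rw [e1, e2, e3, e4, e5,
          ← Finset.sum_Ioc_consecutive _ (Nat.zero_le j) (by omega : j ≤ k - 1)]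
        simp only [add_zero]
  calc ∑ j ∈ Finset.range k, ∑ a ∈ Finset.Icc 1 (k - 1), g k j a
      = ∑ j ∈ Finset.range k,
        (∑ a ∈ Finset.Icc 1 (min j (k - 2)), g k j a
        + ∑ a ∈ Finset.Icc (max j 1 + 1) (k - 1), g k j a
        + (if j = 0 then g k 0 1 else 0)
        + (if j = k - 1 then g k j (k - 1) else 0)) := by
        apply Finset.sum_congr rfl
        intro j hj
        exact key j (Finset.mem_range.mp hj)
    _ = _ := by
        rw [Finset.sum_add_distrib, Finset.sum_add_distrib, Finset.sum_add_distrib]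
        congr 1
        · congr 1
          rw [Finset.sum_ite_eq' (Finset.range k) 0 (fun _ => g k 0 1)]
          rw [if_pos (Finset.mem_range.mpr (by omega))]
        · rw [Finset.sum_ite_eq' (Finset.range k) (k - 1) (fun j => g k j (k - 1))]
          rw [if_pos (Finset.mem_range.mpr (by omega))]

end Main

section PartA
variable {A : Type*} [Ring A] (Q : A → A) (lam : ℕ → (ℕ → A) → (ℕ → ZMod 2) → A)
    (v : ℕ → A) (p : ℕ → ZMod 2)

/-- The generic summand in the expansion of the first sum of the RHS. -/
def hterm (n k' a j : ℕ) : A :=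
  sgn (((((n - k' : ℕ) : ZMod 2) - 1) * psum p k' + (k' : ZMod 2))
      + (((k' + 1 - a : ℕ) : ZMod 2) * psum p j
        + (j : ZMod 2) * (((k' + 1 - a : ℕ) : ZMod 2) - 1)
        + ((a : ZMod 2) - 1) * ((k' + 1 - a : ℕ) : ZMod 2))) *
    (Q (lam a
        (insE v j (k' + 1 - a)
          (lam (k' + 1 - a) (fun i => v (j + i)) (fun i => p (j + i))))
        (insP p j (k' + 1 - a)
          (((k' + 1 - a : ℕ) : ZMod 2) + ∑ i ∈ Finset.range (k' + 1 - a), p (j + i)))) *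
      Qlam Q lam (n - k') (fun i => v (k' + i)) (fun i => p (k' + i)))

variable (hadd : ∀ x y : A, Q (x + y) = Q x + Q y)

include hadd in
lemma RHS1_expand (n : ℕ) :
    ∑ k' ∈ Finset.Icc 3 (n - 1),
      sgn ((((n - k' : ℕ) : ZMod 2) - 1) * psum p k' + (k' : ZMod 2)) *
        (Q (Phi lam k' v p) *
          Qlam Q lam (n - k') (fun i => v (k' + i)) (fun i => p (k' + i)))
    = ∑ k' ∈ Finset.Icc 3 (n - 1), ∑ a ∈ Finset.Icc 2 (k' - 1), ∑ j ∈ Finset.range a,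
        hterm Q lam v p n k' a j := by
  apply Finset.sum_congr rfl
  intro k' _
  unfold Phi
  rw [Qmap_sum hadd, Finset.sum_mul, Finset.mul_sum]
  apply Finset.sum_congr rfl
  intro a _
  rw [Qmap_sum hadd, Finset.sum_mul, Finset.mul_sum]
  apply Finset.sum_congr rfl
  intro j _
  rw [Q_sgn_mul hadd, mul_assoc (sgn _), sgn_mul_sgn_mul]
  rfl

variable (hlam2 : ∀ (v : ℕ → A) (p : ℕ → ZMod 2), lam 2 v p = v 0 * v 1)
variable (hlamrec : ∀ n, 3 ≤ n → ∀ (v : ℕ → A) (p : ℕ → ZMod 2),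
      lam n v p =
        - ∑ k ∈ Finset.Icc 1 (n - 1),
            sgn ((k : ZMod 2) + (((n - k : ℕ) : ZMod 2) - 1) * psum p k) *
              (Qlam Q lam k v p *
                Qlam Q lam (n - k) (fun i => v (k + i)) (fun i => p (k + i))))

lemma partA_term {n a c m j : ℕ} (hn : n = a + c + m) (hc : 1 ≤ c) (hm : 1 ≤ m)
    (ha : 2 ≤ a) (hj : j < a) :
    gterm Q lam v p n (a + m) j a = hterm Q lam v p n (a + c) a j := by
  subst hn
  unfold gterm hterm
  -- normalize the natural-number arithmetic
  rw [show a + c + m + 1 - (a + m) = c + 1 by omega]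
  rw [show a + m - a = m by omega]
  rw [show a + c + m - (a + c) = m by omega]
  rw [show (a + c) + 1 - a = c + 1 by omega]
  rw [Qlam_eq Q lam ha]
  rw [insE_shift_gt _ hj (by omega), insP_shift_gt _ hj (by omega)]
  rw [show a + (c + 1) - 1 = a + c by omega]
  rw [psum_insP_gt _ hj (by omega)]
  rw [show j + (c + 1) = j + (c + 1) from rfl]
  rw [psum_add p j (c + 1)]
  rw [show a + (c + 1) - 1 = a + c by omega]
  congr 1
  apply congrArg sgn
  have hsub : ∀ x y : ZMod 2, x - y = x + y := zmod2_sub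
  push_cast
  simp only [hsub]
  generalize (a : ZMod 2) = A2
  generalize (c : ZMod 2) = C2
  generalize (m : ZMod 2) = M2
  generalize (j : ZMod 2) = J2
  generalize psum p j = X1
  generalize (∑ i ∈ Finset.range (c + 1), p (j + i)) = X2
  generalize psum p (a + c) = X4
  revert A2 C2 M2 J2 X1 X2 X4
  decide

end PartA

section PartAasm
variable {A : Type*} [Ring A] (Q : A → A) (lam : ℕ → (ℕ → A) → (ℕ → ZMod 2) → A)
    (v : ℕ → A) (p : ℕ → ZMod 2)

lemma tri_swap (n : ℕ) (F : ℕ → ℕ → A) :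
    ∑ k ∈ Finset.Icc 2 (n - 1), ∑ a ∈ Finset.Icc 2 (k - 1), F k a
      = ∑ a ∈ Finset.Icc 2 (n - 2), ∑ k ∈ Finset.Icc (a + 1) (n - 1), F k a := by
  have e1 : ∀ k ∈ Finset.Icc 2 (n - 1),
      Finset.Icc 2 (k - 1) = (Finset.Icc 2 (n - 2)).filter (fun a => a < k) := by
    intro k hk
    simp only [Finset.mem_Icc] at hk
    ext x
    simp only [Finset.mem_Icc, Finset.mem_filter]
    omega
  rw [Finset.sum_congr rfl fun k hk => by rw [e1 k hk]]
  rw [sum_swap_filter]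
  apply Finset.sum_congr rfl
  intro a ha
  simp only [Finset.mem_Icc] at ha
  congr 1
  ext k
  simp only [Finset.mem_Icc, Finset.mem_filter]
  omega

lemma partA_asm (n : ℕ) (hn : 4 ≤ n)
    (hlam2 : ∀ (v : ℕ → A) (p : ℕ → ZMod 2), lam 2 v p = v 0 * v 1)
    (hlamrec : ∀ n, 3 ≤ n → ∀ (v : ℕ → A) (p : ℕ → ZMod 2),
      lam n v p =
        - ∑ k ∈ Finset.Icc 1 (n - 1),
            sgn ((k : ZMod 2) + (((n - k : ℕ) : ZMod 2) - 1) * psum p k) *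
              (Qlam Q lam k v p *
                Qlam Q lam (n - k) (fun i => v (k + i)) (fun i => p (k + i)))) :
    ∑ k ∈ Finset.Icc 2 (n - 1), ∑ j ∈ Finset.range k,
        ∑ a ∈ Finset.Icc (max j 1 + 1) (k - 1), gterm Q lam v p n k j a
      = ∑ k' ∈ Finset.Icc 3 (n - 1), ∑ a ∈ Finset.Icc 2 (k' - 1), ∑ j ∈ Finset.range a,
          hterm Q lam v p n k' a j := by
  have step1 : ∑ k ∈ Finset.Icc 2 (n - 1), ∑ j ∈ Finset.range k,
      ∑ a ∈ Finset.Icc (max j 1 + 1) (k - 1), gterm Q lam v p n k j a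
    = ∑ k ∈ Finset.Icc 2 (n - 1), ∑ a ∈ Finset.Icc 2 (k - 1), ∑ j ∈ Finset.range a,
        gterm Q lam v p n k j a := by
    apply Finset.sum_congr rfl
    intro k hk
    simp only [Finset.mem_Icc] at hk
    have e1 : ∀ j : ℕ, Finset.Icc (max j 1 + 1) (k - 1)
        = (Finset.Icc 2 (k - 1)).filter (fun a => j < a) := by
      intro j
      ext x
      simp only [Finset.mem_Icc, Finset.mem_filter]
      omega
    rw [Finset.sum_congr rfl fun j _ => by rw [e1 j]]
    rw [sum_swap_filter]
    apply Finset.sum_congr rfl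
    intro a ha
    simp only [Finset.mem_Icc] at ha
    congr 1
    ext j
    simp only [Finset.mem_range, Finset.mem_filter]
    omega
  rw [step1, tri_swap]
  have stepR : ∑ k' ∈ Finset.Icc 3 (n - 1), ∑ a ∈ Finset.Icc 2 (k' - 1),
      ∑ j ∈ Finset.range a, hterm Q lam v p n k' a j
    = ∑ a ∈ Finset.Icc 2 (n - 2), ∑ k' ∈ Finset.Icc (a + 1) (n - 1),
        ∑ j ∈ Finset.range a, hterm Q lam v p n k' a j := by
    have e0 : ∑ k' ∈ Finset.Icc 2 (n - 1), ∑ a ∈ Finset.Icc 2 (k' - 1),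
        ∑ j ∈ Finset.range a, hterm Q lam v p n k' a j
      = ∑ k' ∈ Finset.Icc 3 (n - 1), ∑ a ∈ Finset.Icc 2 (k' - 1),
        ∑ j ∈ Finset.range a, hterm Q lam v p n k' a j := by
      have e1 : Finset.Icc 2 (n - 1) = Finset.Ico 2 n := by
        ext x; simp only [Finset.mem_Icc, Finset.mem_Ico]; omega
      have e2 : Finset.Icc 3 (n - 1) = Finset.Ico 3 n := by
        ext x; simp only [Finset.mem_Icc, Finset.mem_Ico]; omega
      rw [e1, e2, Finset.sum_eq_sum_Ico_succ_bot (by omega : 2 < n)]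
      have : Finset.Icc 2 (2 - 1) = (∅ : Finset ℕ) := by decide
      rw [this]
      simp
    rw [← e0, tri_swap]
  rw [stepR]
  apply Finset.sum_congr rfl
  intro a ha
  simp only [Finset.mem_Icc] at ha
  rw [sum_Icc_reflect _ (a + 1) (n - 1) (a + n) (by omega) (by omega)]
  rw [show a + n - (n - 1) = a + 1 by omega, show a + n - (a + 1) = n - 1 by omega]
  apply Finset.sum_congr rfl
  intro k' hk'
  simp only [Finset.mem_Icc] at hk'
  apply Finset.sum_congr rfl
  intro j hj
  simp only [Finset.mem_range] at hj
  have key := partA_term Q lam v p (n := n) (a := a) (c := k' - a) (m := n - k')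
    (by omega) (by omega) (by omega) (by omega) hj
  rw [show a + (n - k') = a + n - k' by omega, show a + (k' - a) = k' by omega] at key
  exact key

end PartAasm

section PartB
variable {A : Type*} [Ring A] (Q : A → A) (lam : ℕ → (ℕ → A) → (ℕ → ZMod 2) → A)
    (v : ℕ → A) (p : ℕ → ZMod 2)

/-- The generic summand in the expansion of (minus) the second sum of the RHS. -/
def iterm (n k k2 j2 : ℕ) : A :=
  sgn ((((n - k : ℕ) : ZMod 2) * psum p k
      + (((n - k + 1 - k2 : ℕ) : ZMod 2) * psum (fun i => p (k + i)) j2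
        + (j2 : ZMod 2) * (((n - k + 1 - k2 : ℕ) : ZMod 2) - 1)
        + ((k2 : ZMod 2) - 1) * ((n - k + 1 - k2 : ℕ) : ZMod 2)))
      + 1) *
    (Qlam Q lam k v p *
      Q (lam k2
        (insE (fun i => v (k + i)) j2 (n - k + 1 - k2)
          (lam (n - k + 1 - k2) (fun i => v (k + (j2 + i))) (fun i => p (k + (j2 + i)))))
        (insP (fun i => p (k + i)) j2 (n - k + 1 - k2)
          (((n - k + 1 - k2 : ℕ) : ZMod 2)
            + ∑ i ∈ Finset.range (n - k + 1 - k2), p (k + (j2 + i))))))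

variable (hadd : ∀ x y : A, Q (x + y) = Q x + Q y)

include hadd in
lemma RHS2_expand (n : ℕ) :
    - ∑ k ∈ Finset.Icc 1 (n - 3),
        sgn (((n - k : ℕ) : ZMod 2) * psum p k) *
          (Qlam Q lam k v p *
            Q (Phi lam (n - k) (fun i => v (k + i)) (fun i => p (k + i))))
    = ∑ k ∈ Finset.Icc 1 (n - 3), ∑ k2 ∈ Finset.Icc 2 (n - k - 1),
        ∑ j2 ∈ Finset.range k2, iterm Q lam v p n k k2 j2 := by
  rw [← Finset.sum_neg_distrib]
  apply Finset.sum_congr rfl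
  intro k _
  unfold Phi
  rw [Qmap_sum hadd, Finset.mul_sum, Finset.mul_sum, ← Finset.sum_neg_distrib]
  apply Finset.sum_congr rfl
  intro k2 _
  rw [Qmap_sum hadd, Finset.mul_sum, Finset.mul_sum, ← Finset.sum_neg_distrib]
  apply Finset.sum_congr rfl
  intro j2 _
  rw [Q_sgn_mul hadd]
  rw [← mul_assoc (Qlam Q lam k v p), ← sgn_comm, mul_assoc, sgn_mul_sgn_mul, neg_sgn_mul]
  rfl

variable (hlam2 : ∀ (v : ℕ → A) (p : ℕ → ZMod 2), lam 2 v p = v 0 * v 1)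
variable (hlamrec : ∀ n, 3 ≤ n → ∀ (v : ℕ → A) (p : ℕ → ZMod 2),
      lam n v p =
        - ∑ k ∈ Finset.Icc 1 (n - 1),
            sgn ((k : ZMod 2) + (((n - k : ℕ) : ZMod 2) - 1) * psum p k) *
              (Qlam Q lam k v p *
                Qlam Q lam (n - k) (fun i => v (k + i)) (fun i => p (k + i))))

include hlam2 hlamrec in
lemma partB_term {a k2 j2 d : ℕ} (ha : 1 ≤ a) (hk2 : 2 ≤ k2) (hj2 : j2 < k2) (hd : 1 ≤ d) :
    gterm Q lam v p (a + k2 + d) (k2 + a) (a + j2) a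
      = iterm Q lam v p (a + k2 + d) a k2 j2 := by
  unfold gterm iterm
  rw [show a + k2 + d + 1 - (k2 + a) = d + 1 by omega]
  rw [show k2 + a - a = k2 by omega]
  rw [show a + k2 + d - a + 1 - k2 = d + 1 by omega]
  rw [show a + k2 + d - a = k2 + d by omega]
  have hfv : (fun i => v (a + j2 + i)) = (fun i => v (a + (j2 + i))) := by
    funext i; congr 1; omega
  have hfp : (fun i => p (a + j2 + i)) = (fun i => p (a + (j2 + i))) := by
    funext i; congr 1; omega
  rw [hfv, hfp]
  rw [psum_insP_le _ (by omega : a ≤ a + j2)]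
  rw [insE_shift_le _ (by omega : a ≤ a + j2), insP_shift_le _ (by omega : a ≤ a + j2)]
  rw [show a + j2 - a = j2 by omega]
  rw [Qlam_eq Q lam hk2]
  have hleft : Qlam Q lam a
      (insE v (a + j2) (d + 1)
        (lam (d + 1) (fun i => v (a + (j2 + i))) (fun i => p (a + (j2 + i)))))
      (insP p (a + j2) (d + 1)
        (((d + 1 : ℕ) : ZMod 2) + ∑ i ∈ Finset.range (d + 1), p (a + (j2 + i))))
      = Qlam Q lam a v p := by
    apply Qlam_congr Q lam hlam2 hlamrec ha
    · intro i hi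
      exact insE_lt _ (by omega)
    · intro i hi
      simp only [insP, if_pos (by omega : i < a + j2)]
  rw [hleft]
  congr 1
  apply congrArg sgn
  have hpj : psum p (a + j2) = psum p a + ∑ i ∈ Finset.range j2, p (a + i) :=
    psum_add p a j2
  rw [hpj]
  simp only [psum]
  have hsub : ∀ x y : ZMod 2, x - y = x + y := zmod2_sub
  push_cast
  simp only [hsub]
  generalize (a : ZMod 2) = A2
  generalize (k2 : ZMod 2) = K2
  generalize (d : ZMod 2) = D2
  generalize (j2 : ZMod 2) = J2
  generalize (∑ i ∈ Finset.range a, p i) = G1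
  generalize (∑ i ∈ Finset.range j2, p (a + i)) = G2
  generalize (∑ i ∈ Finset.range (d + 1), p (a + (j2 + i))) = G3
  revert A2 K2 D2 J2 G1 G2 G3
  decide

end PartB

section PartBasm
variable {A : Type*} [Ring A] (Q : A → A) (lam : ℕ → (ℕ → A) → (ℕ → ZMod 2) → A)
    (v : ℕ → A) (p : ℕ → ZMod 2)

lemma tri_swap2 (n : ℕ) (F : ℕ → ℕ → A) :
    ∑ k ∈ Finset.Icc 2 (n - 1), ∑ a ∈ Finset.Icc 1 (k - 2), F k a
      = ∑ a ∈ Finset.Icc 1 (n - 3), ∑ k ∈ Finset.Icc (a + 2) (n - 1), F k a := by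
  have e1 : ∀ k ∈ Finset.Icc 2 (n - 1),
      Finset.Icc 1 (k - 2) = (Finset.Icc 1 (n - 3)).filter (fun a => a + 2 ≤ k) := by
    intro k hk
    simp only [Finset.mem_Icc] at hk
    ext x
    simp only [Finset.mem_Icc, Finset.mem_filter]
    omega
  rw [Finset.sum_congr rfl fun k hk => by rw [e1 k hk]]
  rw [sum_swap_filter]
  apply Finset.sum_congr rfl
  intro a ha
  simp only [Finset.mem_Icc] at ha
  congr 1
  ext k
  simp only [Finset.mem_Icc, Finset.mem_filter]
  omega

variable (hlam2 : ∀ (v : ℕ → A) (p : ℕ → ZMod 2), lam 2 v p = v 0 * v 1)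
variable (hlamrec : ∀ n, 3 ≤ n → ∀ (v : ℕ → A) (p : ℕ → ZMod 2),
      lam n v p =
        - ∑ k ∈ Finset.Icc 1 (n - 1),
            sgn ((k : ZMod 2) + (((n - k : ℕ) : ZMod 2) - 1) * psum p k) *
              (Qlam Q lam k v p *
                Qlam Q lam (n - k) (fun i => v (k + i)) (fun i => p (k + i))))

include hlam2 hlamrec in
lemma partB_asm (n : ℕ) (hn : 4 ≤ n) :
    ∑ k ∈ Finset.Icc 2 (n - 1), ∑ j ∈ Finset.range k,
        ∑ a ∈ Finset.Icc 1 (min j (k - 2)), gterm Q lam v p n k j a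
      = ∑ k ∈ Finset.Icc 1 (n - 3), ∑ k2 ∈ Finset.Icc 2 (n - k - 1),
          ∑ j2 ∈ Finset.range k2, iterm Q lam v p n k k2 j2 := by
  have step1 : ∑ k ∈ Finset.Icc 2 (n - 1), ∑ j ∈ Finset.range k,
      ∑ a ∈ Finset.Icc 1 (min j (k - 2)), gterm Q lam v p n k j a
    = ∑ k ∈ Finset.Icc 2 (n - 1), ∑ a ∈ Finset.Icc 1 (k - 2),
        ∑ j2 ∈ Finset.range (k - a), gterm Q lam v p n k (a + j2) a := by
    apply Finset.sum_congr rfl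
    intro k hk
    simp only [Finset.mem_Icc] at hk
    have e1 : ∀ j : ℕ, Finset.Icc 1 (min j (k - 2))
        = (Finset.Icc 1 (k - 2)).filter (fun a => a ≤ j) := by
      intro j
      ext x
      simp only [Finset.mem_Icc, Finset.mem_filter]
      omega
    rw [Finset.sum_congr rfl fun j _ => by rw [e1 j]]
    rw [sum_swap_filter]
    apply Finset.sum_congr rfl
    intro a ha
    simp only [Finset.mem_Icc] at ha
    have e2 : (Finset.range k).filter (fun j => a ≤ j) = Finset.Ico a k := by
      ext j
      simp only [Finset.mem_range, Finset.mem_filter, Finset.mem_Ico]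
      omega
    rw [e2, Finset.sum_Ico_eq_sum_range]
  rw [step1, tri_swap2]
  apply Finset.sum_congr rfl
  intro a ha
  simp only [Finset.mem_Icc] at ha
  rw [show a + 2 = 2 + a by omega, show n - 1 = (n - a - 1) + a by omega, sum_Icc_shift]
  apply Finset.sum_congr rfl
  intro k2 hk2
  simp only [Finset.mem_Icc] at hk2
  rw [show k2 + a - a = k2 by omega]
  apply Finset.sum_congr rfl
  intro j2 hj2
  simp only [Finset.mem_range] at hj2
  have key := partB_term Q lam v p hlam2 hlamrec (a := a) (k2 := k2) (j2 := j2)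
    (d := n - a - k2) (by omega) (by omega) hj2 (by omega)
  rw [show a + k2 + (n - a - k2) = n by omega] at key
  exact key

end PartBasm

section PartC
variable {A : Type*} [Ring A] (Q : A → A) (lam : ℕ → (ℕ → A) → (ℕ → ZMod 2) → A)
    (v : ℕ → A) (p : ℕ → ZMod 2)

lemma sgn_assoc1 (x y : ZMod 2) (M R : A) :
    sgn x * (sgn y * M * R) = sgn (x + y) * (M * R) := by
  rw [mul_assoc (sgn y), sgn_mul_sgn_mul]

lemma sgn_assoc2 (x y : ZMod 2) (L M : A) :
    sgn x * (L * (sgn y * M)) = sgn (x + y) * (L * M) := by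
  rw [← mul_assoc L, ← sgn_comm, mul_assoc, sgn_mul_sgn_mul]

/-- Expanded X-boundary term. -/
def xt (n k c : ℕ) : A :=
  sgn ((((n + 1 - k : ℕ) : ZMod 2) + (k : ZMod 2) * psum p (n + 1 - k))
      + ((c : ZMod 2) + (((n + 1 - k : ℕ) : ZMod 2) + (c : ZMod 2) + 1) * psum p c)) *
    (Qlam Q lam c v p *
        Qlam Q lam (n + 1 - k - c) (fun i => v (c + i)) (fun i => p (c + i)) *
      Qlam Q lam (k - 1) (fun i => v (n + 1 - k + i)) (fun i => p (n + 1 - k + i)))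

/-- Expanded Y-boundary term. -/
def yt (n k d : ℕ) : A :=
  sgn ((((n + 1 - k : ℕ) : ZMod 2) * psum p (k - 1))
      + ((d : ZMod 2) + (((n + 1 - k : ℕ) : ZMod 2) + (d : ZMod 2) + 1) *
          (psum p (k - 1 + d) + psum p (k - 1)))
      + 1) *
    (Qlam Q lam (k - 1) v p *
      (Qlam Q lam d (fun i => v (k - 1 + i)) (fun i => p (k - 1 + i)) *
        Qlam Q lam (n + 1 - k - d) (fun i => v (k - 1 + d + i)) (fun i => p (k - 1 + d + i))))

variable (hlam2 : ∀ (v : ℕ → A) (p : ℕ → ZMod 2), lam 2 v p = v 0 * v 1)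
variable (hlamrec : ∀ n, 3 ≤ n → ∀ (v : ℕ → A) (p : ℕ → ZMod 2),
      lam n v p =
        - ∑ k ∈ Finset.Icc 1 (n - 1),
            sgn ((k : ZMod 2) + (((n - k : ℕ) : ZMod 2) - 1) * psum p k) *
              (Qlam Q lam k v p *
                Qlam Q lam (n - k) (fun i => v (k + i)) (fun i => p (k + i))))

include hlam2 hlamrec in
lemma partC1 {n k : ℕ} (hn : 4 ≤ n) (hk : 2 ≤ k) (hk2 : k ≤ n - 1) :
    gterm Q lam v p n k 0 1 = ∑ c ∈ Finset.Icc 1 (n - k), xt Q lam v p n k c := by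
  unfold gterm
  have hv0 : (fun i => v (0 + i)) = v := by funext i; congr 1; omega
  have hp0 : (fun i => p (0 + i)) = p := by funext i; congr 1; omega
  rw [hv0, hp0]
  rw [insE_shift_gt _ (by omega : (0:ℕ) < 1) (by omega : 1 ≤ n + 1 - k)]
  rw [insP_shift_gt _ (by omega : (0:ℕ) < 1) (by omega : 1 ≤ n + 1 - k)]
  rw [show 1 + (n + 1 - k) - 1 = n + 1 - k by omega]
  have hq1 : psum (insP p 0 (n + 1 - k)
      (((n + 1 - k : ℕ) : ZMod 2) + ∑ i ∈ Finset.range (n + 1 - k), p i)) 1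
      = ((n + 1 - k : ℕ) : ZMod 2) + ∑ i ∈ Finset.range (n + 1 - k), p i := by
    simp [psum, insP]
  rw [hq1, Qlam_one, insE_eq]
  rw [Lrec Q lam hlam2 hlamrec (show 2 ≤ n + 1 - k by omega) v p]
  rw [neg_neg, show n + 1 - k - 1 = n - k by omega]
  rw [Finset.sum_mul, Finset.mul_sum]
  apply Finset.sum_congr rfl
  intro c hc
  simp only [Finset.mem_Icc] at hc
  rw [sgn_assoc1]
  unfold xt
  congr 1
  apply congrArg sgn
  rw [Nat.cast_sub (show c ≤ n + 1 - k by omega)]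
  rw [Nat.cast_sub (show k ≤ n + 1 by omega)]
  rw [Nat.cast_sub (show 1 ≤ k by omega)]
  push_cast
  simp only [zmod2_sub, psum, Finset.sum_range_zero]
  generalize (n : ZMod 2) = N2
  generalize (k : ZMod 2) = K2
  generalize (c : ZMod 2) = C2
  generalize (∑ i ∈ Finset.range c, p i) = S1
  generalize (∑ i ∈ Finset.range (n + 1 - k), p i) = S2
  revert N2 K2 C2 S1 S2
  decide

end PartC

section PartC2
variable {A : Type*} [Ring A] (Q : A → A) (lam : ℕ → (ℕ → A) → (ℕ → ZMod 2) → A)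
    (v : ℕ → A) (p : ℕ → ZMod 2)
variable (hlam2 : ∀ (v : ℕ → A) (p : ℕ → ZMod 2), lam 2 v p = v 0 * v 1)
variable (hlamrec : ∀ n, 3 ≤ n → ∀ (v : ℕ → A) (p : ℕ → ZMod 2),
      lam n v p =
        - ∑ k ∈ Finset.Icc 1 (n - 1),
            sgn ((k : ZMod 2) + (((n - k : ℕ) : ZMod 2) - 1) * psum p k) *
              (Qlam Q lam k v p *
                Qlam Q lam (n - k) (fun i => v (k + i)) (fun i => p (k + i))))

include hlam2 hlamrec in
lemma partC2 {n k : ℕ} (hn : 4 ≤ n) (hk : 2 ≤ k) (hk2 : k ≤ n - 1) :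
    gterm Q lam v p n k (k - 1) (k - 1) = ∑ d ∈ Finset.Icc 1 (n - k), yt Q lam v p n k d := by
  unfold gterm
  rw [show k - (k - 1) = 1 by omega]
  simp only [Qlam_one, add_zero]
  rw [insE_eq]
  rw [psum_insP_le _ (le_refl (k - 1))]
  have hleft : Qlam Q lam (k - 1)
      (insE v (k - 1) (n + 1 - k)
        (lam (n + 1 - k) (fun i => v (k - 1 + i)) (fun i => p (k - 1 + i))))
      (insP p (k - 1) (n + 1 - k)
        (((n + 1 - k : ℕ) : ZMod 2) + ∑ i ∈ Finset.range (n + 1 - k), p (k - 1 + i)))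
      = Qlam Q lam (k - 1) v p := by
    apply Qlam_congr Q lam hlam2 hlamrec (by omega : 1 ≤ k - 1)
    · intro i hi
      exact insE_lt _ (by omega)
    · intro i hi
      simp only [insP, if_pos (by omega : i < k - 1)]
  rw [hleft]
  rw [Lrec Q lam hlam2 hlamrec (show 2 ≤ n + 1 - k by omega)
    (fun i => v (k - 1 + i)) (fun i => p (k - 1 + i))]
  rw [neg_neg, show n + 1 - k - 1 = n - k by omega]
  rw [Finset.mul_sum, Finset.mul_sum]
  apply Finset.sum_congr rfl
  intro d hd
  simp only [Finset.mem_Icc] at hd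
  have hva : (fun i => v (k - 1 + (d + i))) = fun i => v (k - 1 + d + i) := by
    funext i; congr 1; omega
  have hpa : (fun i => p (k - 1 + (d + i))) = fun i => p (k - 1 + d + i) := by
    funext i; congr 1; omega
  rw [hva, hpa]
  rw [sgn_assoc2]
  unfold yt
  congr 1
  apply congrArg sgn
  rw [psum_add p (k - 1) d]
  rw [Nat.cast_sub (show d ≤ n + 1 - k by omega)]
  rw [Nat.cast_sub (show k ≤ n + 1 by omega)]
  rw [Nat.cast_sub (show 1 ≤ k by omega)]
  push_cast
  simp only [zmod2_sub, psum]
  generalize (n : ZMod 2) = N2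
  generalize (k : ZMod 2) = K2
  generalize (d : ZMod 2) = D2
  generalize (∑ i ∈ Finset.range (k - 1), p i) = S1
  generalize (∑ i ∈ Finset.range d, p (k - 1 + i)) = S2
  revert N2 K2 D2 S1 S2
  decide

end PartC2

section PartC3
variable {A : Type*} [Ring A] (Q : A → A) (lam : ℕ → (ℕ → A) → (ℕ → ZMod 2) → A)
    (v : ℕ → A) (p : ℕ → ZMod 2)

lemma partC3 {c d e : ℕ} (hc : 1 ≤ c) (hd : 1 ≤ d) (he : 1 ≤ e) :
    xt Q lam v p (c + d + e) (e + 1) c + yt Q lam v p (c + d + e) (c + 1) d = 0 := by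
  unfold xt yt
  rw [show c + d + e + 1 - (e + 1) = c + d by omega]
  rw [show c + d - c = d by omega]
  rw [show e + 1 - 1 = e by omega]
  rw [show c + d + e + 1 - (c + 1) = d + e by omega]
  rw [show d + e - d = e by omega]
  rw [show c + 1 - 1 = c by omega]
  rw [mul_assoc (Qlam Q lam c v p) _ _]
  have hsgn : (((d + e : ℕ) : ZMod 2) * psum p c
      + ((d : ZMod 2) + (((d + e : ℕ) : ZMod 2) + (d : ZMod 2) + 1) *
          (psum p (c + d) + psum p c)) + 1)
      = ((((c + d : ℕ) : ZMod 2) + ((e + 1 : ℕ) : ZMod 2) * psum p (c + d))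
      + ((c : ZMod 2) + (((c + d : ℕ) : ZMod 2) + (c : ZMod 2) + 1) * psum p c)) + 1 := by
    push_cast
    generalize (c : ZMod 2) = C2
    generalize (d : ZMod 2) = D2
    generalize (e : ZMod 2) = E2
    generalize psum p c = S1
    generalize psum p (c + d) = S2
    revert C2 D2 E2 S1 S2
    decide
  rw [hsgn, ← neg_sgn_mul]
  exact add_neg_cancel _

lemma partC_asm (n : ℕ) (hn : 4 ≤ n)
    (hlam2 : ∀ (v : ℕ → A) (p : ℕ → ZMod 2), lam 2 v p = v 0 * v 1)
    (hlamrec : ∀ n, 3 ≤ n → ∀ (v : ℕ → A) (p : ℕ → ZMod 2),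
      lam n v p =
        - ∑ k ∈ Finset.Icc 1 (n - 1),
            sgn ((k : ZMod 2) + (((n - k : ℕ) : ZMod 2) - 1) * psum p k) *
              (Qlam Q lam k v p *
                Qlam Q lam (n - k) (fun i => v (k + i)) (fun i => p (k + i)))) :
    (∑ k ∈ Finset.Icc 2 (n - 1), gterm Q lam v p n k 0 1)
      + (∑ k ∈ Finset.Icc 2 (n - 1), gterm Q lam v p n k (k - 1) (k - 1)) = 0 := by
  have hXS : ∑ k ∈ Finset.Icc 2 (n - 1), gterm Q lam v p n k 0 1
      = ∑ c ∈ Finset.Icc 1 (n - 2), ∑ d ∈ Finset.Icc 1 (n - c - 1),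
          xt Q lam v p n (n + 1 - c - d) c := by
    rw [Finset.sum_congr rfl fun k hk => by
      have hk' := Finset.mem_Icc.mp hk
      exact partC1 Q lam v p hlam2 hlamrec hn hk'.1 hk'.2]
    have e1 : ∀ k ∈ Finset.Icc 2 (n - 1),
        Finset.Icc 1 (n - k) = (Finset.Icc 1 (n - 2)).filter (fun c => k + c ≤ n) := by
      intro k hk
      simp only [Finset.mem_Icc] at hk
      ext x
      simp only [Finset.mem_Icc, Finset.mem_filter]
      omega
    rw [Finset.sum_congr rfl fun k hk => by rw [e1 k hk]]
    rw [sum_swap_filter]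
    apply Finset.sum_congr rfl
    intro c hc
    simp only [Finset.mem_Icc] at hc
    have e2 : (Finset.Icc 2 (n - 1)).filter (fun k => k + c ≤ n) = Finset.Icc 2 (n - c) := by
      ext k
      simp only [Finset.mem_Icc, Finset.mem_filter]
      omega
    rw [e2]
    rw [sum_Icc_reflect _ 2 (n - c) (n + 1 - c) (by omega) (by omega)]
    rw [show n + 1 - c - (n - c) = 1 by omega, show n + 1 - c - 2 = n - c - 1 by omega]
  have hYS : ∑ k ∈ Finset.Icc 2 (n - 1), gterm Q lam v p n k (k - 1) (k - 1)
      = ∑ c ∈ Finset.Icc 1 (n - 2), ∑ d ∈ Finset.Icc 1 (n - c - 1),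
          yt Q lam v p n (c + 1) d := by
    rw [Finset.sum_congr rfl fun k hk => by
      have hk' := Finset.mem_Icc.mp hk
      exact partC2 Q lam v p hlam2 hlamrec hn hk'.1 hk'.2]
    have e3 : Finset.Icc 2 (n - 1) = Finset.Icc (1 + 1) ((n - 2) + 1) := by
      congr 1 <;> omega
    rw [e3, sum_Icc_shift]
    apply Finset.sum_congr rfl
    intro c hc
    simp only [Finset.mem_Icc] at hc
    rw [show n - (c + 1) = n - c - 1 by omega]
  rw [hXS, hYS, ← Finset.sum_add_distrib]
  apply Finset.sum_eq_zero
  intro c hc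
  simp only [Finset.mem_Icc] at hc
  rw [← Finset.sum_add_distrib]
  apply Finset.sum_eq_zero
  intro d hd
  simp only [Finset.mem_Icc] at hd
  have key := partC3 Q lam v p (c := c) (d := d) (e := n - c - d) hc.1 hd.1 (by omega)
  rw [show c + d + (n - c - d) = n by omega, show n - c - d + 1 = n + 1 - c - d by omega] at key
  exact key

end PartC3


/-- the recursion for `Φ` from the proof of Lemma 1: for every
`n ≥ 4` and all homogeneous `v₁, …, v_n ∈ V`,
`Φ_n(v₁,…,v_n) = ∑_{k+l=n, k≥3, l≥1} (-1)^{(l-1)(|v₁|+⋯+|v_k|)+k} [QΦ_k(v₁,…,v_k)]·[Qλ_l(v_{k+1},…,v_n)]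
 - ∑_{k+l=n, k≥1, l≥3} (-1)^{l(|v₁|+⋯+|v_k|)} [Qλ_k(v₁,…,v_k)]·[QΦ_l(v_{k+1},…,v_n)]`,
with the `k = 1` resp. `l = 1` terms interpreted via `Qλ₁ := -Id`. -/
theorem phi_recursion {K A : Type*} [Field K] [Ring A] [Algebra K A]
    -- `A` is a superalgebra over `K`: a ℤ/2-graded associative algebra
    (𝒜 : ZMod 2 → Submodule K A) [GradedAlgebra 𝒜]
    -- `Q` is an odd linear operator
    (Q : A →ₗ[K] A)
    (hQ : ∀ (i : ZMod 2), ∀ x ∈ 𝒜 i, Q x ∈ 𝒜 (i + 1))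
    -- `λ₂(v₁,v₂) = v₁·v₂` and, recursively, `λ_n(v₁,…,v_n) =
    -- -∑ (-1)^{k+(l-1)(|v₁|+⋯+|v_k|)} [Qλ_k(v₁,…,v_k)]·[Qλ_l(v_{k+1},…,v_n)]`
    -- for `n ≥ 3`, with `Qλ₁ := -Id`; here the sum runs over all splittings
    -- `(v₁,…,v_k), (v_{k+1},…,v_n)` with `k, l ≥ 1` (so `l = n - k`, matching
    -- the arities in the paper's explicit formulae for `λ₃, λ₄, λ₅`)
    (lam : ℕ → (ℕ → A) → (ℕ → ZMod 2) → A)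
    (hlam2 : ∀ (v : ℕ → A) (p : ℕ → ZMod 2), lam 2 v p = v 0 * v 1)
    (hlamrec : ∀ n, 3 ≤ n → ∀ (v : ℕ → A) (p : ℕ → ZMod 2),
      lam n v p =
        - ∑ k ∈ Finset.Icc 1 (n - 1),
            sgn ((k : ZMod 2) + (((n - k : ℕ) : ZMod 2) - 1) * psum p k) *
              (Qlam (⇑Q) lam k v p *
                Qlam (⇑Q) lam (n - k) (fun i => v (k + i)) (fun i => p (k + i))))
    (n : ℕ) (hn : 4 ≤ n) (v : ℕ → A) (p : ℕ → ZMod 2)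
    -- `v₁, …, v_n` are homogeneous, `v_i` of parity `p_i`
    (hv : ∀ i < n, v i ∈ 𝒜 (p i)) :
    Phi lam n v p =
      ∑ k ∈ Finset.Icc 3 (n - 1),
        sgn ((((n - k : ℕ) : ZMod 2) - 1) * psum p k + (k : ZMod 2)) *
          (Q (Phi lam k v p) *
            Qlam (⇑Q) lam (n - k) (fun i => v (k + i)) (fun i => p (k + i)))
      - ∑ k ∈ Finset.Icc 1 (n - 3),
          sgn (((n - k : ℕ) : ZMod 2) * psum p k) *
            (Qlam (⇑Q) lam k v p *
              Q (Phi lam (n - k) (fun i => v (k + i)) (fun i => p (k + i)))) := by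
  
  have hadd : ∀ x y : A, Q (x + y) = Q x + Q y := fun x y => map_add Q x y
  rw [master (⇑Q) lam v p hlam2 hlamrec (by omega : 2 ≤ n)]
  rw [split_sum (⇑Q) lam hlam2 hlamrec n hn (gterm (⇑Q) lam v p n)]
  rw [partB_asm (⇑Q) lam v p hlam2 hlamrec n hn]
  rw [partA_asm (⇑Q) lam v p n hn hlam2 hlamrec]
  rw [← RHS1_expand (⇑Q) lam v p hadd n]
  rw [← RHS2_expand (⇑Q) lam v p hadd n]
  have hC := partC_asm (⇑Q) lam v p n hn hlam2 hlamrec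
  rw [add_assoc, hC, add_zero]
  abel
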